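/- arXiv:2509.24363 — 3 statements merged into one kernel-verified Lean document; each statement's English description precedes it below -/
import Mathlib

section
/- Let x be a real number with x ≠ 1 and r a natural number. Then Σ_{i=0}^{⌊r/2⌋} (r−2i)·(x^{2i} + x^{2i+1}) − ( r − (r+2)x + (r+2)x^{r+1} − r·x^{r+2} ) / (1−x)² = 2·Σ_{i=1}^{r} ⌊(i+1)/2⌋ · x^{i}. -/
lemma inert_pairsum (x : ℝ) (n : ℕ) :
    ∑ i ∈ Finset.range n, (x ^ (2 * i) + x ^ (2 * i + 1)) =
      ∑ j ∈ Finset.range (2 * n), x ^ j := by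
  induction n with
  | zero => simp
  | succ n ih =>
    rw [Finset.sum_range_succ, ih, show 2 * (n + 1) = 2 * n + 1 + 1 by ring,
      Finset.sum_range_succ, Finset.sum_range_succ]
    ring

lemma inert_key (x : ℝ) (r : ℕ) :
    (∑ i ∈ Finset.range (r / 2 + 1), ((r : ℝ) - 2 * (i : ℝ)) * (x ^ (2 * i) + x ^ (2 * i + 1)) -
        2 * ∑ i ∈ Finset.Icc 1 r, (((i + 1) / 2 : ℕ) : ℝ) * x ^ i) * (1 - x) ^ 2 =
      (r : ℝ) - ((r : ℝ) + 2) * x + ((r : ℝ) + 2) * x ^ (r + 1) - (r : ℝ) * x ^ (r + 2) := by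
  induction r with
  | zero => simp
  | succ r ih =>
    rcases Nat.even_or_odd r with ⟨k, rfl⟩ | ⟨k, rfl⟩
    · -- r = k + k
      rw [show (k + k + 1) / 2 = k from by omega]
      rw [Finset.sum_Icc_succ_top (by omega : 1 ≤ k + k + 1)]
      rw [show (k + k) / 2 = k from by omega] at ih
      have hs : ∑ i ∈ Finset.range (k + 1),
          (((k + k + 1 : ℕ) : ℝ) - 2 * (i : ℝ)) * (x ^ (2 * i) + x ^ (2 * i + 1)) =
          (∑ i ∈ Finset.range (k + 1),
            (((k + k : ℕ) : ℝ) - 2 * (i : ℝ)) * (x ^ (2 * i) + x ^ (2 * i + 1))) +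
          ∑ i ∈ Finset.range (k + 1), (x ^ (2 * i) + x ^ (2 * i + 1)) := by
        rw [← Finset.sum_add_distrib]
        refine Finset.sum_congr rfl fun i _ => ?_
        push_cast
        ring
      rw [hs, inert_pairsum, show (k + k + 1 + 1) / 2 = k + 1 from by omega]
      push_cast at ih ⊢
      linear_combination ih + (x - 1) * geom_sum_mul x (2 * (k + 1))
    · -- r = 2k + 1
      rw [show (2 * k + 1 + 1) / 2 = k + 1 from by omega]
      rw [Finset.sum_range_succ]
      rw [Finset.sum_Icc_succ_top (by omega : 1 ≤ 2 * k + 1 + 1)]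
      rw [show (2 * k + 1) / 2 = k from by omega] at ih
      have hs : ∑ i ∈ Finset.range (k + 1),
          (((2 * k + 1 + 1 : ℕ) : ℝ) - 2 * (i : ℝ)) * (x ^ (2 * i) + x ^ (2 * i + 1)) =
          (∑ i ∈ Finset.range (k + 1),
            (((2 * k + 1 : ℕ) : ℝ) - 2 * (i : ℝ)) * (x ^ (2 * i) + x ^ (2 * i + 1))) +
          ∑ i ∈ Finset.range (k + 1), (x ^ (2 * i) + x ^ (2 * i + 1)) := by
        rw [← Finset.sum_add_distrib]
        refine Finset.sum_congr rfl fun i _ => ?_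
        push_cast
        ring
      rw [hs, inert_pairsum, show (2 * k + 1 + 1 + 1) / 2 = k + 1 from by omega]
      push_cast at ih ⊢
      linear_combination ih + (x - 1) * geom_sum_mul x (2 * (k + 1))

/-- Inert-place B-series identity: for `x ≠ 1`,
`Σ_{i=0}^{⌊r/2⌋} (r−2i)(x^{2i} + x^{2i+1}) − (r − (r+2)x + (r+2)x^{r+1} − r·x^{r+2})/(1−x)²
  = 2·Σ_{i=1}^{r} ⌊(i+1)/2⌋·x^i`. -/
theorem inert_B_series (x : ℝ) (hx : x ≠ 1) (r : ℕ) :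
    ∑ i ∈ Finset.range (r / 2 + 1), ((r : ℝ) - 2 * (i : ℝ)) * (x ^ (2 * i) + x ^ (2 * i + 1)) -
        ((r : ℝ) - ((r : ℝ) + 2) * x + ((r : ℝ) + 2) * x ^ (r + 1) - (r : ℝ) * x ^ (r + 2)) /
          (1 - x) ^ 2 =
      2 * ∑ i ∈ Finset.Icc 1 r, (((i + 1) / 2 : ℕ) : ℝ) * x ^ i := by
  have h1 : (1 : ℝ) - x ≠ 0 := sub_ne_zero.mpr (Ne.symm hx)
  have h2 : ((1 : ℝ) - x) ^ 2 ≠ 0 := pow_ne_zero _ h1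
  field_simp
  linear_combination inert_key x r
end

section
/- Let x and c be real numbers with x ≠ 0. For each natural number r define B⁺(r) = (r+2)x^{r+1} + c·x^{r} − Σ_{i=1}^{r} x^{i} and B⁻(r) = −(r+2)x^{r+1} − c·Σ_{i=0}^{r} x^{i} − Σ_{i=1}^{r} x^{i}. If the quantity B⁺(r) + B⁻(r) is independent of r (i.e., equals B⁺(0) + B⁻(0) for all r), then c = −2x, and in that case B⁺(r) + B⁻(r) = 0 for all r. -/
/-- Determination of the constant `c` in the ramified even-dimensional B-series: if
`B⁺(r) = (r+2)x^{r+1} + c·x^r − Σ_{i=1}^r x^i` and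
`B⁻(r) = −(r+2)x^{r+1} − c·Σ_{i=0}^r x^i − Σ_{i=1}^r x^i`, and `B⁺(r) + B⁻(r)` is independent
of `r`, then `c = −2x` and `B⁺(r) + B⁻(r) = 0` for all `r`. -/
theorem ramified_constant_determination (x c : ℝ) (hx : x ≠ 0) (Bp Bm : ℕ → ℝ)
    (hBp : ∀ r, Bp r = ((r : ℝ) + 2) * x ^ (r + 1) + c * x ^ r - ∑ i ∈ Finset.Icc 1 r, x ^ i)
    (hBm : ∀ r, Bm r = -(((r : ℝ) + 2) * x ^ (r + 1)) - c * ∑ i ∈ Finset.range (r + 1), x ^ i -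
        ∑ i ∈ Finset.Icc 1 r, x ^ i)
    (hconst : ∀ r, Bp r + Bm r = Bp 0 + Bm 0) :
    c = -2 * x ∧ ∀ r, Bp r + Bm r = 0 := by
  have h0 : Bp 0 + Bm 0 = 0 := by
    rw [hBp 0, hBm 0]
    simp
  have h1 := hconst 1
  rw [hBp 1, hBm 1, h0] at h1
  simp [Finset.sum_range_succ, Finset.Icc_self] at h1
  have hc : c = -2 * x := by nlinarith [h1]
  exact ⟨hc, fun r => (hconst r).trans h0⟩
end

section
/- Let R be a commutative ring in which 2 is invertible and let p ∈ R. In M₂(R) set π = [[0,−p],[1,0]] and j = [[1,0],[0,−1]] (so π² = −p·1 and π·j = −j·π). Then the R-submodule of M₂(R) generated by the four matrices π·(1+j), (1−j), p·(1+j), π·(1−j) equals the set of all matrices [[p·x, p·y],[z, w]] with x, y, z, w ∈ R. -/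
/-- `π = [[0,−p],[1,0]]`, a square root of `−p` in `M₂(R)`. -/
def piM {R : Type*} [CommRing R] (p : R) : Matrix (Fin 2) (Fin 2) R := !![0, -p; 1, 0]

/-- `j = [[1,0],[0,−1]]`. -/
def jM {R : Type*} [CommRing R] : Matrix (Fin 2) (Fin 2) R := !![1, 0; 0, -1]

lemma gen1 {R : Type*} [CommRing R] (p : R) :
    piM p * (1 + jM) = !![(0:R), 0; 2, 0] := by
  ext i j; fin_cases i <;> fin_cases j <;>
    simp [piM, jM, Matrix.mul_apply, Fin.sum_univ_two, Matrix.one_apply] <;> ring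

lemma gen2 {R : Type*} [CommRing R] :
    (1 - jM : Matrix (Fin 2) (Fin 2) R) = !![(0:R), 0; 0, 2] := by
  ext i j; fin_cases i <;> fin_cases j <;>
    simp [jM, Matrix.one_apply] <;> ring

lemma gen3 {R : Type*} [CommRing R] (p : R) :
    p • (1 + jM : Matrix (Fin 2) (Fin 2) R) = !![2*p, 0; 0, 0] := by
  ext i j; fin_cases i <;> fin_cases j <;>
    simp [jM, Matrix.one_apply] <;> ring

lemma gen4 {R : Type*} [CommRing R] (p : R) :
    piM p * (1 - jM) = !![(0:R), -(2*p); 0, 0] := by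
  ext i j; fin_cases i <;> fin_cases j <;>
    simp [piM, jM, Matrix.mul_apply, Fin.sum_univ_two, Matrix.one_apply] <;> ring

/-- If `2` is invertible in `R`, the `R`-submodule of `M₂(R)` generated by
`π(1+j), (1−j), p(1+j), π(1−j)` is exactly the set of matrices `[[p·x, p·y],[z, w]]`,
i.e. those whose top row is divisible by `p`. -/
theorem modular_lattice_in_split_quaternion {R : Type*} [CommRing R]
    (h2 : IsUnit (2 : R)) (p : R) :
    (Submodule.span R
        ({piM p * (1 + jM), 1 - jM, p • (1 + jM), piM p * (1 - jM)} :
          Set (Matrix (Fin 2) (Fin 2) R)) : Set (Matrix (Fin 2) (Fin 2) R)) =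
      {A : Matrix (Fin 2) (Fin 2) R | ∃ x y z w : R, A = !![p * x, p * y; z, w]} := by
  obtain ⟨u, hu⟩ := h2.exists_right_inv
  ext A
  constructor
  · intro hA
    induction hA using Submodule.span_induction with
    | mem B hB =>
      rcases hB with h | h | h | h
      · exact ⟨0, 0, 2, 0, by rw [h, gen1]; norm_num⟩
      · exact ⟨0, 0, 0, 2, by rw [h, gen2]; norm_num⟩
      · exact ⟨2, 0, 0, 0, by rw [h, gen3]; congr 1; ring⟩
      · exact ⟨0, -2, 0, 0, by rw [Set.mem_singleton_iff] at h; rw [h, gen4]; congr 1; ring⟩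
    | zero => exact ⟨0, 0, 0, 0, by ext i j; fin_cases i <;> fin_cases j <;> simp⟩
    | add B C _ _ hB hC =>
      obtain ⟨x, y, z, w, rfl⟩ := hB
      obtain ⟨x', y', z', w', rfl⟩ := hC
      exact ⟨x + x', y + y', z + z', w + w', by
        ext i j; fin_cases i <;> fin_cases j <;> simp <;> ring⟩
    | smul c B _ hB =>
      obtain ⟨x, y, z, w, rfl⟩ := hB
      exact ⟨c * x, c * y, c * z, c * w, by
        ext i j; fin_cases i <;> fin_cases j <;> simp [Matrix.smul_apply] <;> ring⟩
  · rintro ⟨x, y, z, w, rfl⟩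
    have h1 : (piM p * (1 + jM)) ∈ Submodule.span R
        ({piM p * (1 + jM), 1 - jM, p • (1 + jM), piM p * (1 - jM)} :
          Set (Matrix (Fin 2) (Fin 2) R)) := Submodule.subset_span (by simp)
    have h2' : (1 - jM) ∈ Submodule.span R
        ({piM p * (1 + jM), 1 - jM, p • (1 + jM), piM p * (1 - jM)} :
          Set (Matrix (Fin 2) (Fin 2) R)) := Submodule.subset_span (by simp)
    have h3 : (p • (1 + jM)) ∈ Submodule.span R
        ({piM p * (1 + jM), 1 - jM, p • (1 + jM), piM p * (1 - jM)} :
          Set (Matrix (Fin 2) (Fin 2) R)) := Submodule.subset_span (by simp)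
    have h4 : (piM p * (1 - jM)) ∈ Submodule.span R
        ({piM p * (1 + jM), 1 - jM, p • (1 + jM), piM p * (1 - jM)} :
          Set (Matrix (Fin 2) (Fin 2) R)) := Submodule.subset_span (by simp)
    have key : !![p * x, p * y; z, w] =
        (x * u) • (p • (1 + jM)) + (-(y * u)) • (piM p * (1 - jM)) +
        (z * u) • (piM p * (1 + jM)) + (w * u) • (1 - jM) := by
      rw [gen1, gen4, gen3, gen2]
      have hu2 : u * 2 = 1 := by rw [mul_comm]; exact hu
      ext i j
      fin_cases i <;> fin_cases j <;> simp [Matrix.smul_apply]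
      · linear_combination (-(p*x)) * hu2
      · linear_combination (-(p*y)) * hu2
      · linear_combination (-z) * hu2
      · linear_combination (-w) * hu2
    rw [SetLike.mem_coe, key]
    exact Submodule.add_mem _ (Submodule.add_mem _ (Submodule.add_mem _
      (Submodule.smul_mem _ _ h3) (Submodule.smul_mem _ _ h4))
      (Submodule.smul_mem _ _ h1)) (Submodule.smul_mem _ _ h2')
end
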